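/- Let f(X) = a_0 + a_1 X + ... + a_n X^n ∈ Z[X] with a_0 a_n ≠ 0. Suppose there exist two distinct indices j_1, j_2 ∈ {1, ..., n-1} with j_1 + j_2 ≠ n, and two distinct primes p and q, such that: (i) p divides a_i for all i ≠ j_1, p does not divide a_{j_1}, p^2 does not divide a_0, p^2 does not divide a_n; (ii) q divides a_i for all i ≠ j_2, q does not divide a_{j_2}, q^2 does not divide a_0, q^2 does not divide a_n. Then f is irreducible over Q. -/

import Mathlib

/-!
Modulo `p` we have `f ≡ a_{j₁} X^{j₁}`, so in a factorization `f = g h` over `ℤ` the reductions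
of `g` and `h` are monomials whose degrees add up to `j₁`. As `p² ∤ a₀`, one of `g, h` has
constant term prime to `p`, so its reduction is constant; as `p² ∤ aₙ`, one of them keeps its
degree modulo `p`. Hence `deg g ∈ {0, j₁, n - j₁, n}`, and likewise `deg g ∈ {0, j₂, n - j₂, n}`;
since `j₁ ≠ j₂` and `j₁ + j₂ ≠ n`, `deg g ∈ {0, n}`. Gauss's lemma, applied to the primitive part
of `f`, turns this into irreducibility over `ℚ`.
-/

open Polynomial Finset

namespace Polynomial

theorem natDegree_eq_zero_of_mul_eq_C_mul_X_pow {S : Type*} [CommRing S] [IsDomain S]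
    {g h : S[X]} {c : S} {j : ℕ} (hc : c ≠ 0) (hgh : g * h = C c * X ^ j) (hg0 : g.coeff 0 ≠ 0) :
    g.natDegree = 0 := by
  have hprod : g * h ≠ 0 := by
    rw [hgh]; exact mul_ne_zero (C_ne_zero.mpr hc) (pow_ne_zero _ X_ne_zero)
  have hg : g ≠ 0 := left_ne_zero_of_mul hprod
  have hh : h ≠ 0 := right_ne_zero_of_mul hprod
  -- degree and trailing degree are both additive and agree on `C c * X ^ j`
  have htrail := natTrailingDegree_mul hg hh
  have hdeg := natDegree_mul hg hh
  rw [hgh, natTrailingDegree_mul_X_pow (C_ne_zero.mpr hc), natTrailingDegree_C] at htrail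
  rw [hgh, natDegree_C_mul_X_pow _ _ hc] at hdeg
  have := g.natTrailingDegree_le_natDegree
  have := h.natTrailingDegree_le_natDegree
  have : g.natTrailingDegree = 0 := natTrailingDegree_eq_zero.mpr (Or.inr hg0)
  omega

theorem natDegree_factor_of_map_quotient_eq_C_mul_X_pow {R : Type*} [CommRing R] [IsDomain R]
    {P : Ideal R} [P.IsPrime] {f g h : R[X]} (hfgh : f = g * h)
    {c : R ⧸ P} (hc : c ≠ 0) {j : ℕ} (hf : f.map (Ideal.Quotient.mk P) = C c * X ^ j)
    (h0 : f.coeff 0 ∉ P ^ 2) (hlead : f.leadingCoeff ∉ P ^ 2) :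
    g.natDegree = 0 ∨ g.natDegree = j ∨ g.natDegree = f.natDegree - j ∨
      g.natDegree = f.natDegree := by
  set φ := Ideal.Quotient.mk P
  have hmul : g.map φ * h.map φ = C c * X ^ j := by rw [← Polynomial.map_mul, ← hfgh, hf]
  have hprod : g.map φ * h.map φ ≠ 0 := by
    rw [hmul]; exact mul_ne_zero (C_ne_zero.mpr hc) (pow_ne_zero _ X_ne_zero)
  have hdeg_mod : (g.map φ).natDegree + (h.map φ).natDegree = j := by
    rw [← natDegree_mul (left_ne_zero_of_mul hprod) (right_ne_zero_of_mul hprod), hmul,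
      natDegree_C_mul_X_pow _ _ hc]
  have hf0 : f ≠ 0 := by rintro rfl; simp at h0
  have hdeg : g.natDegree + h.natDegree = f.natDegree := by
    rw [hfgh] at hf0 ⊢
    exact (natDegree_mul (left_ne_zero_of_mul hf0) (right_ne_zero_of_mul hf0)).symm
  have hmem_sq {x y : R} (hx : x ∈ P) (hy : y ∈ P) : x * y ∈ P ^ 2 := by
    rw [pow_two]; exact Ideal.mul_mem_mul hx hy
  have hconst : g.coeff 0 ∉ P ∨ h.coeff 0 ∉ P := by
    by_contra! hboth
    exact h0 (by rw [hfgh, mul_coeff_zero]; exact hmem_sq hboth.1 hboth.2)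
  have hlc : g.leadingCoeff ∉ P ∨ h.leadingCoeff ∉ P := by
    by_contra! hboth
    exact hlead (by rw [hfgh, leadingCoeff_mul]; exact hmem_sq hboth.1 hboth.2)
  have hconst_mod : (g.map φ).natDegree = 0 ∨ (h.map φ).natDegree = 0 := by
    refine hconst.imp (fun hg => ?_) (fun hh => ?_)
    · exact natDegree_eq_zero_of_mul_eq_C_mul_X_pow hc hmul
        (by rwa [coeff_map, Ne, Ideal.Quotient.eq_zero_iff_mem])
    · exact natDegree_eq_zero_of_mul_eq_C_mul_X_pow hc (by rw [mul_comm, hmul])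
        (by rwa [coeff_map, Ne, Ideal.Quotient.eq_zero_iff_mem])
  have hlc_mod : (g.map φ).natDegree = g.natDegree ∨ (h.map φ).natDegree = h.natDegree :=
    hlc.imp (fun hg => natDegree_map_of_leadingCoeff_ne_zero φ
        (by rwa [Ne, Ideal.Quotient.eq_zero_iff_mem]))
      (fun hh => natDegree_map_of_leadingCoeff_ne_zero φ
        (by rwa [Ne, Ideal.Quotient.eq_zero_iff_mem]))
  omega

theorem natDegree_factor_of_prime_dvd_coeff {R : Type*} [CommRing R] [IsDomain R]
    {f g h : R[X]} (hfgh : f = g * h) {p : R} (hp : Prime p) {j : ℕ}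
    (hdvd : ∀ i ≠ j, p ∣ f.coeff i) (hj : ¬ p ∣ f.coeff j)
    (h0 : ¬ p ^ 2 ∣ f.coeff 0) (hlead : ¬ p ^ 2 ∣ f.leadingCoeff) :
    g.natDegree = 0 ∨ g.natDegree = j ∨ g.natDegree = f.natDegree - j ∨
      g.natDegree = f.natDegree := by
  have : (Ideal.span {p}).IsPrime := (Ideal.span_singleton_prime hp.ne_zero).mpr hp
  refine natDegree_factor_of_map_quotient_eq_C_mul_X_pow (P := Ideal.span {p}) hfgh
    (c := Ideal.Quotient.mk _ (f.coeff j))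
    (by rwa [Ne, Ideal.Quotient.eq_zero_iff_mem, Ideal.mem_span_singleton]) ?_
    (by rwa [Ideal.span_singleton_pow, Ideal.mem_span_singleton])
    (by rwa [Ideal.span_singleton_pow, Ideal.mem_span_singleton])
  ext i
  rw [coeff_map, coeff_C_mul_X_pow]
  split_ifs with hij
  · rw [hij]
  · rw [Ideal.Quotient.eq_zero_iff_mem, Ideal.mem_span_singleton]
    exact hdvd i hij

theorem IsPrimitive.isUnit_of_dvd_of_natDegree_eq_zero {R : Type*} [CommRing R] {f g : R[X]}
    (hf : f.IsPrimitive) (hgf : g ∣ f) (hg : g.natDegree = 0) : IsUnit g := by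
  obtain ⟨r, rfl⟩ := natDegree_eq_zero.mp hg
  exact isUnit_C.mpr (isPrimitive_of_dvd hf hgf r dvd_rfl)

section GaussLemma

variable {R : Type*} [CommRing R] [IsDomain R] [NormalizedGCDMonoid R]
  {K : Type*} [Field K] [Algebra R K] [IsFractionRing R K]

theorem irreducible_map_of_forall_natDegree_factor {f : R[X]} (hf : 0 < f.natDegree)
    (hfac : ∀ g h : R[X], f = g * h → g.natDegree = 0 ∨ g.natDegree = f.natDegree) :
    Irreducible (f.map (algebraMap R K)) := by
  have hf0 : f ≠ 0 := ne_zero_of_natDegree_gt hf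
  have hc : f.content ≠ 0 := content_eq_zero_iff.not.mpr hf0
  have hprim := f.isPrimitive_primPart
  have hirr : Irreducible f.primPart := by
    refine ⟨fun hu => ?_, fun g h hgh => ?_⟩
    · have := natDegree_eq_zero_of_isUnit hu
      rw [natDegree_primPart] at this
      omega
    have hdeg : g.natDegree + h.natDegree = f.natDegree := by
      rw [← f.natDegree_primPart, hgh, natDegree_mul]
      all_goals (rintro rfl; simp [hprim.ne_zero] at hgh)
    have := hfac (C f.content * g) h (by rw [mul_assoc, ← hgh, ← eq_C_content_mul_primPart])
    rw [natDegree_C_mul hc] at this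
    rcases this with hg | hg
    · exact .inl (hprim.isUnit_of_dvd_of_natDegree_eq_zero (hgh ▸ dvd_mul_right g h) hg)
    · exact .inr (hprim.isUnit_of_dvd_of_natDegree_eq_zero (hgh ▸ dvd_mul_left h g) (by omega))
  have hunit : IsUnit (C (algebraMap R K f.content)) :=
    isUnit_C.mpr (IsUnit.mk0 _ ((IsFractionRing.injective R K).ne_iff' (map_zero _) |>.mpr hc))
  rw [eq_C_content_mul_primPart f, Polynomial.map_mul, map_C, irreducible_isUnit_mul hunit]
  exact hprim.irreducible_iff_irreducible_map_fraction_map.mp hirr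

end GaussLemma

theorem coeff_sum_range_C_mul_X_pow {R : Type*} [Semiring R] (a : ℕ → R) (n i : ℕ) :
    (∑ k ∈ range (n + 1), C (a k) * X ^ k).coeff i = if i ≤ n then a i else 0 := by
  simp

theorem natDegree_sum_range_C_mul_X_pow {R : Type*} [Semiring R] {a : ℕ → R} {n : ℕ}
    (ha : a n ≠ 0) : (∑ k ∈ range (n + 1), C (a k) * X ^ k).natDegree = n :=
  natDegree_eq_of_le_of_coeff_ne_zero
    (natDegree_le_iff_coeff_eq_zero.mpr fun i hi => by
      rw [coeff_sum_range_C_mul_X_pow, if_neg (by exact_mod_cast hi.not_ge)])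
    (by rwa [coeff_sum_range_C_mul_X_pow, if_pos le_rfl])

end Polynomial

theorem corollary_1_26_general (n : ℕ) (a : ℕ → ℤ)
    (j₁ j₂ : ℕ) (hj1n : j₁ ≤ n - 1) (hj2n : j₂ ≤ n - 1)
    (hjne : j₁ ≠ j₂) (hjsum : j₁ + j₂ ≠ n)
    (p q : ℕ) (hp : p.Prime) (hq : q.Prime)
    (hp1 : ∀ i ≤ n, i ≠ j₁ → (p : ℤ) ∣ a i)
    (hp2 : ¬ (p : ℤ) ∣ a j₁)
    (hp3 : ¬ (p : ℤ)^2 ∣ a 0) (hp4 : ¬ (p : ℤ)^2 ∣ a n)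
    (hq1 : ∀ i ≤ n, i ≠ j₂ → (q : ℤ) ∣ a i)
    (hq2 : ¬ (q : ℤ) ∣ a j₂)
    (hq3 : ¬ (q : ℤ)^2 ∣ a 0) (hq4 : ¬ (q : ℤ)^2 ∣ a n) :
    Irreducible ((∑ i ∈ range (n+1), C (a i) * X ^ i).map (Int.castRingHom ℚ)) := by
  set f : ℤ[X] := ∑ i ∈ range (n+1), C (a i) * X ^ i
  have hcoeff (i : ℕ) (hi : i ≤ n) : f.coeff i = a i := by
    rw [coeff_sum_range_C_mul_X_pow, if_pos hi]
  have hdeg : f.natDegree = n := natDegree_sum_range_C_mul_X_pow fun h => hp4 (h ▸ dvd_zero _)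
  have hlead : f.leadingCoeff = a n := by rw [leadingCoeff, hdeg, hcoeff n le_rfl]
  have hdvd {r : ℤ} {j : ℕ} (hr : ∀ i ≤ n, i ≠ j → r ∣ a i) (i : ℕ) (hij : i ≠ j) :
      r ∣ f.coeff i := by
    rw [coeff_sum_range_C_mul_X_pow]
    split_ifs with hi
    exacts [hr i hi hij, dvd_zero r]
  have hfac (g h : ℤ[X]) (hgh : f = g * h) : g.natDegree = 0 ∨ g.natDegree = f.natDegree := by
    have hdeg_p := natDegree_factor_of_prime_dvd_coeff hgh (Nat.prime_iff_prime_int.mp hp)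
      (hdvd hp1) (by rwa [hcoeff j₁ (by omega)]) (by rwa [hcoeff 0 (by omega)]) (by rwa [hlead])
    have hdeg_q := natDegree_factor_of_prime_dvd_coeff hgh (Nat.prime_iff_prime_int.mp hq)
      (hdvd hq1) (by rwa [hcoeff j₂ (by omega)]) (by rwa [hcoeff 0 (by omega)]) (by rwa [hlead])
    omega
  rw [← algebraMap_int_eq]
  exact irreducible_map_of_forall_natDegree_factor (by omega) hfac

theorem corollary_1_26 (n : ℕ) (hn : 1 ≤ n) (a : ℕ → ℤ)
    (ha0 : a 0 ≠ 0) (han : a n ≠ 0)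
    (j₁ j₂ : ℕ) (hj1 : 1 ≤ j₁) (hj1n : j₁ ≤ n - 1) (hj2 : 1 ≤ j₂) (hj2n : j₂ ≤ n - 1)
    (hjne : j₁ ≠ j₂) (hjsum : j₁ + j₂ ≠ n)
    (p q : ℕ) (hp : p.Prime) (hq : q.Prime) (hpq : p ≠ q)
    (hp1 : ∀ i ≤ n, i ≠ j₁ → (p : ℤ) ∣ a i)
    (hp2 : ¬ (p : ℤ) ∣ a j₁)
    (hp3 : ¬ (p : ℤ)^2 ∣ a 0) (hp4 : ¬ (p : ℤ)^2 ∣ a n)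
    (hq1 : ∀ i ≤ n, i ≠ j₂ → (q : ℤ) ∣ a i)
    (hq2 : ¬ (q : ℤ) ∣ a j₂)
    (hq3 : ¬ (q : ℤ)^2 ∣ a 0) (hq4 : ¬ (q : ℤ)^2 ∣ a n) :
    Irreducible ((∑ i ∈ range (n+1), C (a i) * X ^ i).map (Int.castRingHom ℚ)) :=
  corollary_1_26_general n a j₁ j₂ hj1n hj2n hjne hjsum p q hp hq hp1 hp2 hp3 hp4 hq1 hq2 hq3 hq4
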